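/- arXiv:1612.07475 — 3 statements merged into one kernel-verified Lean document; each statement's English description precedes it below -/
import Mathlib

section
/- Let A, B, C, D be strings of length n, $ a fresh character, Z = $^{2n+1}, X = reverse(A) ++ Z ++ B, Y = reverse(C) ++ Z ++ D. Then the maximum length of a common palindromic subsequence of X and Y equals 2n + 1 + 2·L, where L is the maximum length of a common subsequence of A, B, C, and D. -/
/-!
A common palindromic subsequence `P` avoiding `$` lies in `reverse A ++ B`, so it has length at
most `2n`. If `P` contains `$`, then `P = u ++ $^k ++ w` with `u` and `w` free of `$` and
`k ≤ 2n + 1`; this splitting is forced (`u` is the `$`-free prefix of `P`), so it is the same for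
`X` and `Y`, and `P` being a palindrome forces `w = reverse u`. Hence `reverse u` is a common
subsequence of `A`, `B`, `C`, `D`, and `|P| = 2|u| + k ≤ 2L + 2n + 1`. The bound is attained by
`reverse T ++ Z ++ T` for a longest common subsequence `T`.
-/

namespace List

variable {α : Type*}

theorem exists_eq_append_replicate_append_of_sublist {P U V : List α} {d : α} {m : ℕ}
    (h : P <+ U ++ replicate m d ++ V) :
    ∃ u k w, P = u ++ replicate k d ++ w ∧ u <+ U ∧ k ≤ m ∧ w <+ V := by
  obtain ⟨uz, w, rfl, huz, hw⟩ := sublist_append_iff.mp h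
  obtain ⟨u, z, rfl, hu, hz⟩ := sublist_append_iff.mp huz
  obtain ⟨k, hk, rfl⟩ := sublist_replicate_iff.mp hz
  exact ⟨u, k, w, rfl, hu, hk, hw⟩

theorem length_le_of_sublist_append_replicate_append {P U V : List α} {d : α} {m : ℕ}
    (h : P <+ U ++ replicate m d ++ V) (hd : d ∉ P) :
    P.length ≤ U.length + V.length := by
  obtain ⟨u, k, w, rfl, hu, -, hw⟩ := exists_eq_append_replicate_append_of_sublist h
  have hk : k = 0 := by
    by_contra hk
    exact hd (by simp [mem_replicate, hk])
  subst hk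
  simpa using Nat.add_le_add hu.length_le hw.length_le

variable [DecidableEq α]

theorem takeWhile_ne_append_replicate_append {u w : List α} {d : α} {k : ℕ}
    (hu : d ∉ u) (hk : 0 < k) :
    (u ++ replicate k d ++ w).takeWhile (· ≠ d) = u := by
  obtain ⟨k, rfl⟩ := Nat.exists_eq_add_of_lt hk
  rw [append_assoc, takeWhile_append_of_pos fun a ha => by simpa using ne_of_mem_of_not_mem ha hu]
  simp [replicate_succ]

theorem eq_reverse_of_palindrome_append_replicate_append {u w : List α} {d : α} {k : ℕ}
    (hu : d ∉ u) (hw : d ∉ w) (hk : 0 < k)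
    (hpal : (u ++ replicate k d ++ w).reverse = u ++ replicate k d ++ w) :
    w = u.reverse := by
  have hw' : d ∉ w.reverse := by simpa using hw
  have := congrArg (takeWhile (· ≠ d)) hpal
  rw [reverse_append, reverse_append, reverse_replicate, ← append_assoc,
    takeWhile_ne_append_replicate_append hw' hk, takeWhile_ne_append_replicate_append hu hk]
    at this
  exact reverse_eq_iff.mp this

theorem reverse_takeWhile_ne_sublist_of_palindrome {P U V : List α} {d : α} {m : ℕ}
    (hU : d ∉ U) (hV : d ∉ V) (hpal : P.reverse = P)
    (h : P <+ U.reverse ++ replicate m d ++ V) (hd : d ∈ P) :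
    (P.takeWhile (· ≠ d)).reverse <+ U ∧ (P.takeWhile (· ≠ d)).reverse <+ V ∧
      P.length ≤ 2 * (P.takeWhile (· ≠ d)).length + m := by
  obtain ⟨u, k, w, rfl, hu, hkm, hw⟩ := exists_eq_append_replicate_append_of_sublist h
  have hdu : d ∉ u := fun hdu => hU (mem_reverse.mp (hu.subset hdu))
  have hdw : d ∉ w := fun hdw => hV (hw.subset hdw)
  have hk : 0 < k := by
    by_contra hk
    simp_all
  rw [takeWhile_ne_append_replicate_append hdu hk]
  obtain rfl := eq_reverse_of_palindrome_append_replicate_append hdu hdw hk hpal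
  refine ⟨sublist_reverse_iff.mp hu, hw, ?_⟩
  simp only [length_append, length_replicate, length_reverse]
  omega

end List

open List in
theorem stmt_5_general {α : Type*} (n : ℕ) (A B C D : List α) (d : α)
    (hA : A.length = n) (hB : B.length = n)
    (hdA : d ∉ A) (hdB : d ∉ B) (hdC : d ∉ C) (hdD : d ∉ D)
    (Z X Y : List α)
    (hZ : Z = List.replicate (2 * n + 1) d)
    (hX : X = A.reverse ++ Z ++ B) (hY : Y = C.reverse ++ Z ++ D)
    (L : ℕ)
    (hL : IsGreatest {l : ℕ | ∃ T : List α,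
      T.Sublist A ∧ T.Sublist B ∧ T.Sublist C ∧ T.Sublist D ∧ T.length = l} L) :
    IsGreatest {l : ℕ | ∃ P : List α,
      P.reverse = P ∧ P.Sublist X ∧ P.Sublist Y ∧ P.length = l}
      (2 * n + 1 + 2 * L) := by
  classical
  subst hZ hX hY
  obtain ⟨⟨T, hTA, hTB, hTC, hTD, rfl⟩, hLmax⟩ := hL
  refine ⟨⟨T.reverse ++ replicate (2 * n + 1) d ++ T, by simp, ?_, ?_, by simp; ring⟩, ?_⟩
  · exact (hTA.reverse.append (Sublist.refl _)).append hTB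
  · exact (hTC.reverse.append (Sublist.refl _)).append hTD
  rintro _ ⟨P, hpal, hPX, hPY, rfl⟩
  by_cases hd : d ∈ P
  · obtain ⟨hUA, hUB, hlen⟩ := reverse_takeWhile_ne_sublist_of_palindrome hdA hdB hpal hPX hd
    obtain ⟨hUC, hUD, -⟩ := reverse_takeWhile_ne_sublist_of_palindrome hdC hdD hpal hPY hd
    have := hLmax ⟨_, hUA, hUB, hUC, hUD, length_reverse⟩
    omega
  · have := length_le_of_sublist_append_replicate_append hPX hd
    simp only [length_reverse] at this
    omega

theorem stmt_5 {α : Type*} (n : ℕ) (A B C D : List α) (d : α)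
    (hA : A.length = n) (hB : B.length = n) (hC : C.length = n) (hD : D.length = n)
    (hdA : d ∉ A) (hdB : d ∉ B) (hdC : d ∉ C) (hdD : d ∉ D)
    (Z X Y : List α)
    (hZ : Z = List.replicate (2 * n + 1) d)
    (hX : X = A.reverse ++ Z ++ B) (hY : Y = C.reverse ++ Z ++ D)
    (L : ℕ)
    (hL : IsGreatest {l : ℕ | ∃ T : List α,
      T.Sublist A ∧ T.Sublist B ∧ T.Sublist C ∧ T.Sublist D ∧ T.length = l} L) :
    IsGreatest {l : ℕ | ∃ P : List α,
      P.reverse = P ∧ P.Sublist X ∧ P.Sublist Y ∧ P.length = l}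
      (2 * n + 1 + 2 * L) :=
  stmt_5_general n A B C D d hA hB hdA hdB hdC hdD Z X Y hZ hX hY L hL
end

section
/- Given a palindrome P of even length 2r that is a common subsequence of A and B, there exists a chain of r nested rectangles of matching position pairs: sequences i₁ < ... < i_r < j_r < ... < j₁ in positions of A and k₁ < ... < k_r < ℓ_r < ... < ℓ₁ in positions of B, such that A_{i_t} = A_{j_t} = B_{k_t} = B_{ℓ_t} = P_t = P_{2r+1-t} for all 1 ≤ t ≤ r. -/
theorem List.get_eq_get_of_reverse_eq {α : Type*} {P : List α} (hpal : P.reverse = P)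
    {m n : ℕ} (hm : m < P.length) (hn : n < P.length) (hmn : m + n + 1 = P.length) :
    P.get ⟨m, hm⟩ = P.get ⟨n, hn⟩ := by
  have h := List.getElem_reverse (l := P) (i := n) (by simpa using hn)
  simp only [hpal] at h
  simp only [List.get_eq_getElem, h]
  congr 1; omega

theorem List.Sublist.exists_nested_positions {α : Type*} {P A : List α} (hA : P.Sublist A)
    {r : ℕ} (hr : 2 * r ≤ P.length) :
    ∃ i j : Fin r → Fin A.length, StrictMono i ∧ StrictAnti j ∧ (∀ t, (i t : ℕ) < j t) ∧
      ∀ t : Fin r, A.get (i t) = P.get ⟨t, by omega⟩ ∧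
        A.get (j t) = P.get ⟨2 * r - 1 - t, by omega⟩ := by
  obtain ⟨f, hf⟩ := List.sublist_iff_exists_fin_orderEmbedding_get_eq.mp hA
  refine ⟨fun t => f ⟨t, by omega⟩, fun t => f ⟨2 * r - 1 - t, by omega⟩,
    fun a b hab => f.strictMono ?_, fun a b hab => f.strictMono ?_,
    fun t => f.strictMono ?_, fun t => ⟨(hf _).symm, (hf _).symm⟩⟩ <;>
  simp only [Fin.lt_def] at * <;> omega

theorem stmt_13 {α : Type*} (A B P : List α) (r : ℕ)
    (hpal : P.reverse = P) (hlen : P.length = 2 * r)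
    (hA : P.Sublist A) (hB : P.Sublist B) :
    ∃ (i j : Fin r → Fin A.length) (k l : Fin r → Fin B.length),
      StrictMono i ∧ StrictAnti j ∧ StrictMono k ∧ StrictAnti l ∧
      (∀ t : Fin r, (i t : ℕ) < j t) ∧ (∀ t : Fin r, (k t : ℕ) < l t) ∧
      ∀ t : Fin r,
        A.get (i t) = A.get (j t) ∧
        A.get (i t) = B.get (k t) ∧
        A.get (i t) = B.get (l t) ∧
        A.get (i t) = P.get ⟨t, by omega⟩ ∧
        A.get (i t) = P.get ⟨2 * r - 1 - t, by omega⟩ := by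
  obtain ⟨i, j, hi, hj, hij, hAij⟩ := hA.exists_nested_positions hlen.ge
  obtain ⟨k, l, hk, hl, hkl, hBkl⟩ := hB.exists_nested_positions hlen.ge
  refine ⟨i, j, k, l, hi, hj, hk, hl, hij, hkl, fun t => ?_⟩
  have hmirror : P.get ⟨t, by omega⟩ = P.get ⟨2 * r - 1 - t, by omega⟩ :=
    List.get_eq_get_of_reverse_eq hpal _ _ (by omega)
  obtain ⟨hi_t, hj_t⟩ := hAij t
  obtain ⟨hk_t, hl_t⟩ := hBkl t
  rw [hi_t, hj_t, hk_t, hl_t, ← hmirror]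
  exact ⟨rfl, rfl, rfl, rfl, rfl⟩
end

section
/- Let X = U ++ Z ++ V where Z = $^{m}, and $ does not occur in U or V. If P is a sublist of X containing at least m occurrences of $, then P can be split as P₁ ++ $^{m} ++ P₂ with P₁ a sublist of U and P₂ a sublist of V. -/
theorem stmt_18 {α : Type*} [DecidableEq α] (U V P : List α) (d : α) (m : ℕ)
    (hdU : d ∉ U) (hdV : d ∉ V)
    (hP : P.Sublist (U ++ List.replicate m d ++ V))
    (hcount : m ≤ P.count d) :
    ∃ P₁ P₂ : List α,
      P = P₁ ++ List.replicate m d ++ P₂ ∧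
      P₁.Sublist U ∧ P₂.Sublist V ∧ d ∉ P₁ ∧ d ∉ P₂ := by
  rw [List.sublist_append_iff] at hP
  obtain ⟨AB, C, rfl, hAB, hC⟩ := hP
  rw [List.sublist_append_iff] at hAB
  obtain ⟨A, B, rfl, hA, hB⟩ := hAB
  obtain ⟨k, hk, rfl⟩ := List.sublist_replicate_iff.mp hB
  have hdA : d ∉ A := fun h => hdU (hA.subset h)
  have hdC : d ∉ C := fun h => hdV (hC.subset h)
  have hcA : A.count d = 0 := List.count_eq_zero.mpr hdA
  have hcC : C.count d = 0 := List.count_eq_zero.mpr hdC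
  have : (A ++ List.replicate k d ++ C).count d = k := by
    simp [List.count_append, hcA, hcC]
  have hkm : k = m := le_antisymm hk (by omega)
  subst hkm
  exact ⟨A, C, rfl, hA, hC, hdA, hdC⟩
end
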